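/- Define e_n over ℚ(q,t) by e_0 = 1, e_1 = 1 - q t, and e_{n+2} = (1 + q^{n+1} t - q^{2n+2} t - q^{2n+3} t) e_{n+1} + q^{3n+2}(1 - q^{n+1}) t^2 e_n. Then for all n ≥ 0, e_n = ∑_{k=0}^n (-t)^k q^{nk} C(n,k)_q. -/
import Mathlib


open Finset

/-- q-Pochhammer symbol (a;q)_n. -/
noncomputable def qPoch {K : Type*} [Field K] (q a : K) (n : ℕ) : K :=
  ∏ j ∈ Finset.range n, (1 - a * q ^ j)

/-- Gaussian (q-)binomial coefficient. -/
noncomputable def qbinom {K : Type*} [Field K] (q : K) (n k : ℕ) : K :=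
  if k ≤ n then qPoch q q n / (qPoch q q k * qPoch q q (n - k)) else 0

section Aux
variable {K : Type*} [Field K] (q : K)

lemma qPoch_succ (n : ℕ) : qPoch q q (n+1) = qPoch q q n * (1 - q^(n+1)) := by
  simp [qPoch, Finset.prod_range_succ, pow_succ, mul_comm]

variable (hne : ∀ j : ℕ, (1:K) - q^(j+1) ≠ 0)
include hne

lemma qPoch_ne (n : ℕ) : qPoch q q n ≠ 0 := by
  induction n with
  | zero => simp [qPoch]
  | succ n ih => rw [qPoch_succ]; exact mul_ne_zero ih (hne n)

lemma qbinom_self (n : ℕ) : qbinom q n n = 1 := by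
  have h0 : qPoch q q 0 = 1 := by simp [qPoch]
  rw [qbinom, if_pos le_rfl, Nat.sub_self, h0, mul_one, div_self (qPoch_ne q hne n)]

set_option maxHeartbeats 2000000 in
lemma main_q (n j : ℕ) (hj : j ≤ n) :
    q^((n+2)*(j+2)) * qbinom q (n+2) (j+2)
    = q^((n+1)*(j+2)) * qbinom q (n+1) (j+2)
      - (q^(n+1) - q^(2*n+2) - q^(2*n+3)) * q^((n+1)*(j+1)) * qbinom q (n+1) (j+1)
      + q^(3*n+2) * (1 - q^(n+1)) * q^(n*j) * qbinom q n j := by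
  rcases eq_or_lt_of_le hj with rfl | hlt
  · rw [show qbinom q (j+2) (j+2) = 1 from qbinom_self q hne _,
      show qbinom q (j+1) (j+1) = 1 from qbinom_self q hne _,
      show qbinom q j j = 1 from qbinom_self q hne _,
      show qbinom q (j+1) (j+2) = 0 from by rw [qbinom, if_neg (by omega)]]
    ring

  · obtain ⟨d, rfl⟩ : ∃ d, n = j + d + 1 := ⟨n - j - 1, by omega⟩
    have hPn := qPoch_ne q hne (j+d+1)
    have hPj := qPoch_ne q hne j
    have hPd := qPoch_ne q hne d
    have h1 := hne j
    have h2 : (1:K) - q^(j+2) ≠ 0 := hne (j+1)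
    have h3 := hne d
    have h4 : (1:K) - q^(j+d+2) ≠ 0 := hne (j+d+1)
    have h5 : (1:K) - q^(j+d+3) ≠ 0 := hne (j+d+2)
    set D : K := (qPoch q q j*(1-q^(j+1))*(1-q^(j+2))) * (qPoch q q d*(1-q^(d+1))) with hD
    have hDne : D ≠ 0 := by
      apply mul_ne_zero (mul_ne_zero (mul_ne_zero hPj h1) h2) (mul_ne_zero hPd h3)
    have e1 : qbinom q (j+d+1+2) (j+2)
        = (qPoch q q (j+d+1)*(1-q^(j+d+2))*(1-q^(j+d+3))) / D := by
      rw [qbinom, if_pos (by omega), show j+d+1+2 - (j+2) = d+1 from by omega,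
        show j+d+1+2 = (j+d+1+1)+1 from by omega, qPoch_succ q (j+d+1+1), qPoch_succ q (j+d+1),
        show j+2 = (j+1)+1 from rfl, qPoch_succ q (j+1), qPoch_succ q j, qPoch_succ q d, hD]
      try field_simp
      try ring
    have e2 : qbinom q (j+d+1+1) (j+2)
        = (qPoch q q (j+d+1)*(1-q^(j+d+2))*(1-q^(d+1))) / D := by
      rw [qbinom, if_pos (by omega), show j+d+1+1 - (j+2) = d from by omega,
        qPoch_succ q (j+d+1),
        show j+2 = (j+1)+1 from rfl, qPoch_succ q (j+1), qPoch_succ q j, hD]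
      try field_simp
      try ring
    have e3 : qbinom q (j+d+1+1) (j+1)
        = (qPoch q q (j+d+1)*(1-q^(j+d+2))*(1-q^(j+2))) / D := by
      rw [qbinom, if_pos (by omega), show j+d+1+1 - (j+1) = d+1 from by omega,
        qPoch_succ q (j+d+1), qPoch_succ q j, qPoch_succ q d, hD]
      try field_simp
      try ring
    have e4 : qbinom q (j+d+1) j
        = (qPoch q q (j+d+1)*(1-q^(j+1))*(1-q^(j+2))) / D := by
      rw [qbinom, if_pos (by omega), show j+d+1 - j = d+1 from by omega,
        qPoch_succ q d, hD]
      try field_simp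
      try ring
    rw [e1, e2, e3, e4]
    clear_value D
    field_simp
    ring


lemma qbinom_zero_right (n : ℕ) : qbinom q n 0 = 1 := by
  have h0 : qPoch q q 0 = 1 := by simp [qPoch]
  rw [qbinom, if_pos (Nat.zero_le n), Nat.sub_zero, h0, one_mul,
    div_self (qPoch_ne q hne n)]

lemma qbinom_one (n : ℕ) : qbinom q (n+1) 1 = (1 - q^(n+1)) / (1 - q) := by
  have h1 : qPoch q q 1 = 1 - q := by simp [qPoch]
  have h2 : n + 1 - 1 = n := by omega
  rw [qbinom, if_pos (by omega), h1, h2, qPoch_succ]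
  rw [div_eq_div_iff (mul_ne_zero (by simpa using hne 0) (qPoch_ne q hne n))
    (by simpa using hne 0)]
  ring

lemma step (t : K) (n : ℕ) :
    (1 + q^(n+1)*t - q^(2*n+2)*t - q^(2*n+3)*t)
        * (∑ k ∈ Finset.range (n+2), (-t)^k * q^((n+1)*k) * qbinom q (n+1) k)
      + q^(3*n+2)*(1-q^(n+1))*t^2 * (∑ k ∈ Finset.range (n+1), (-t)^k * q^(n*k) * qbinom q n k)
    = ∑ k ∈ Finset.range (n+3), (-t)^k * q^((n+2)*k) * qbinom q (n+2) k := by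
  have hg2 : qbinom q (n+1) (n+2) = 0 := by rw [qbinom, if_neg (by omega)]
  have main : (∑ k ∈ Finset.range (n+1), (-t)^(k+2) * q^((n+2)*(k+2)) * qbinom q (n+2) (k+2))
      = (∑ k ∈ Finset.range (n+1), (-t)^(k+2) * q^((n+1)*(k+2)) * qbinom q (n+1) (k+2))
        + (q^(n+1)-q^(2*n+2)-q^(2*n+3))*t
            *(∑ k ∈ Finset.range (n+1), (-t)^(k+1) * q^((n+1)*(k+1)) * qbinom q (n+1) (k+1))
        + q^(3*n+2)*(1-q^(n+1))*t^2
            *(∑ k ∈ Finset.range (n+1), (-t)^k * q^(n*k) * qbinom q n k) := by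
    rw [Finset.mul_sum, Finset.mul_sum, ← Finset.sum_add_distrib, ← Finset.sum_add_distrib]
    refine Finset.sum_congr rfl (fun k hk => ?_)
    have hk' : k ≤ n := Nat.lt_succ_iff.mp (Finset.mem_range.mp hk)
    linear_combination ((-t)^(k+2)) * main_q q hne n k hk'
  have rel : (∑ k ∈ Finset.range (n+1), (-t)^(k+2) * q^((n+1)*(k+2)) * qbinom q (n+1) (k+2))
      = (∑ k ∈ Finset.range (n+1), (-t)^(k+1) * q^((n+1)*(k+1)) * qbinom q (n+1) (k+1))
        - (-t)^1 * q^((n+1)*1) * qbinom q (n+1) 1 := by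
    rw [Finset.sum_range_succ (fun k => (-t)^(k+2) * q^((n+1)*(k+2)) * qbinom q (n+1) (k+2)) n,
      Finset.sum_range_succ' (fun k => (-t)^(k+1) * q^((n+1)*(k+1)) * qbinom q (n+1) (k+1)) n,
      hg2]
    have h3 : ∑ k ∈ Finset.range n, (-t)^(k+1+1) * q^((n+1)*(k+1+1)) * qbinom q (n+1) (k+1+1)
        = ∑ k ∈ Finset.range n, (-t)^(k+2) * q^((n+1)*(k+2)) * qbinom q (n+1) (k+2) :=
      Finset.sum_congr rfl (fun k _ => by norm_num)
    rw [h3]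
    norm_num
  have hb : q^(n+2)*qbinom q (n+2) 1 = q^(n+1)*qbinom q (n+1) 1
      - (q^(n+1)-q^(2*n+2)-q^(2*n+3)) := by
    have hb1 : qbinom q (n+2) 1 = (1 - q^(n+2)) / (1 - q) := by
      have := qbinom_one q hne (n+1)
      norm_num at this ⊢
      exact this
    rw [hb1, qbinom_one q hne n]
    have hq1 : (1:K) - q ≠ 0 := by simpa using hne 0
    field_simp
    ring
  rw [Finset.sum_range_succ' (fun k => (-t)^k * q^((n+2)*k) * qbinom q (n+2) k) (n+2),
    Finset.sum_range_succ' (fun k => (-t)^(k+1) * q^((n+2)*(k+1)) * qbinom q (n+2) (k+1)) (n+1),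
    Finset.sum_range_succ' (fun k => (-t)^k * q^((n+1)*k) * qbinom q (n+1) k) (n+1)]
  have h4 : ∑ k ∈ Finset.range (n+1), (-t)^(k+1+1) * q^((n+2)*(k+1+1)) * qbinom q (n+2) (k+1+1)
      = ∑ k ∈ Finset.range (n+1), (-t)^(k+2) * q^((n+2)*(k+2)) * qbinom q (n+2) (k+2) :=
    Finset.sum_congr rfl (fun k _ => by norm_num)
  rw [h4, main, rel, qbinom_zero_right q hne, qbinom_zero_right q hne]
  norm_num
  linear_combination t*hb

end Aux

/-- The sequence e_n over the fraction field in q = X 0 and t = X 1 has the closed form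
sum over the product basis q^{nk} C(n,k)_q. -/
theorem e_product_basis_formula (e : ℕ → FractionRing (MvPolynomial (Fin 2) ℚ))
    (q t : FractionRing (MvPolynomial (Fin 2) ℚ))
    (hq : q = algebraMap (MvPolynomial (Fin 2) ℚ) _ (MvPolynomial.X 0))
    (ht : t = algebraMap (MvPolynomial (Fin 2) ℚ) _ (MvPolynomial.X 1))
    (he0 : e 0 = 1) (he1 : e 1 = 1 - q * t)
    (he : ∀ n : ℕ, e (n + 2) =
      (1 + q ^ (n + 1) * t - q ^ (2 * n + 2) * t - q ^ (2 * n + 3) * t) * e (n + 1)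
        + q ^ (3 * n + 2) * (1 - q ^ (n + 1)) * t ^ 2 * e n) :
    ∀ n : ℕ, e n = ∑ k ∈ Finset.range (n + 1), (-t) ^ k * q ^ (n * k) * qbinom q n k := by
  have hinj := IsFractionRing.injective (MvPolynomial (Fin 2) ℚ)
    (FractionRing (MvPolynomial (Fin 2) ℚ))
  have hne : ∀ j : ℕ, (1 : FractionRing (MvPolynomial (Fin 2) ℚ)) - q^(j+1) ≠ 0 := by
    intro j h
    have h2 : algebraMap (MvPolynomial (Fin 2) ℚ) (FractionRing (MvPolynomial (Fin 2) ℚ))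
        ((1:MvPolynomial (Fin 2) ℚ) - (MvPolynomial.X 0)^(j+1))
        = algebraMap (MvPolynomial (Fin 2) ℚ) (FractionRing (MvPolynomial (Fin 2) ℚ))
          (0 : MvPolynomial (Fin 2) ℚ) := by
      rw [map_sub, map_pow, map_one, map_zero, ← hq]; exact h
    have h3 := hinj h2
    have h4 := congrArg (MvPolynomial.eval (fun _ => (0:ℚ))) h3
    simp [zero_pow] at h4
  suffices h : ∀ n, (e n = ∑ k ∈ Finset.range (n + 1), (-t)^k * q^(n*k) * qbinom q n k)
      ∧ (e (n+1) = ∑ k ∈ Finset.range (n + 2), (-t)^k * q^((n+1)*k) * qbinom q (n+1) k) by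
    exact fun n => (h n).1
  intro n
  induction n with
  | zero =>
    constructor
    · rw [he0]
      rw [Finset.sum_range_one, qbinom_zero_right q hne]
      norm_num
    · rw [he1, Finset.sum_range_succ, Finset.sum_range_one,
        qbinom_zero_right q hne, qbinom_self q hne]
      ring_nf
  | succ n ih =>
    refine ⟨ih.2, ?_⟩
    rw [he n, ih.1, ih.2]
    exact step q hne t n
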